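/- Fix a real b > 1 and constants A > 0, B > 0. Let (p_n) be a sequence of reals with p_n ≥ 2 and p_n → ∞, let (a_n) be a sequence in (0, 1] with a_n ≥ p_n^{−A} for all n, and let (E_n) be a sequence with 1 ≤ E_n ≤ p_n^{B} for all n. Then there exists a constant C > 0 such that for all sufficiently large n, −log( inf_{x ∈ [−E_n, E_n]} g_{a_n,b}(x) ) ≤ C log p_n, where g_{a,b} is the NBP marginal density with σ² = 1. -/

import Mathlib

open Real MeasureTheory Filter

/-- The (standardized, σ² = 1) NBP marginal density, as an extended-real-valued
integral (so that the pole at `x = 0` when `a ≤ 1/2` is the value `∞`). -/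
noncomputable def nbpMarginal (a b : ℝ) (x : ℝ) : ENNReal :=
  ∫⁻ t in Set.Ioi (0 : ℝ),
    ENNReal.ofReal ((Real.Gamma (a + b) / (Real.Gamma a * Real.Gamma b)) *
      ((2 * π * t) ^ (-(1 / 2 : ℝ)) * Real.exp (-x ^ 2 / (2 * t)) *
        t ^ (a - 1) * (1 + t) ^ (-(a + b))))

/-!
Restricting the mixing integral to `t ∈ [s, 2s]` with `s = 1 + x²` bounds every factor of the
integrand below by a power of `s`; together with `Γ(a) ≤ 1/a` and `Γ(a + b) ≥ 1/2` this gives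
`g_{a,b}(x) ≥ a (3(1 + x²))^{-(2+b)} / (64 Γ(b))`. For `|x| ≤ E_n ≤ p_n^B`, `a_n ≥ p_n^{-A}` and
`p_n ≥ 64 Γ(b)` the right-hand side is at least `p_n^{-C}` with `C = 1 + A + (2B + 3)(2 + b)`.
-/

open Set

namespace Real

theorem Gamma_le_one_of_mem_Icc {y : ℝ} (hy : y ∈ Icc 1 2) : Gamma y ≤ 1 := by
  simpa [Gamma_two] using
    convexOn_Gamma.le_max_of_mem_Icc (by norm_num : (1 : ℝ) ∈ Ioi 0) (by norm_num) hy

theorem one_half_le_Gamma {y : ℝ} (hy : 1 ≤ y) : 1 / 2 ≤ Gamma y := by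
  have hmono := Gamma_strictMonoOn_Ici.monotoneOn
  rcases le_total y 2 with hy2 | hy2
  · have h : Gamma 2 ≤ Gamma (y + 1) :=
      hmono (mem_Ici.2 le_rfl) (mem_Ici.2 (by linarith)) (by linarith)
    rw [Gamma_two, Gamma_add_one (by positivity)] at h
    nlinarith [Gamma_pos_of_pos (by positivity : 0 < y)]
  · have h : Gamma 2 ≤ Gamma y := hmono (mem_Ici.2 le_rfl) hy2 hy2
    linarith [Gamma_two]

theorem div_le_Gamma_add_div_Gamma_mul_Gamma {a b : ℝ} (ha0 : 0 < a) (ha1 : a ≤ 1) (hb : 0 < b)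
    (hab : 1 ≤ a + b) : a / (2 * Gamma b) ≤ Gamma (a + b) / (Gamma a * Gamma b) := by
  have hGa : Gamma a ≤ 1 / a := by
    rw [le_div_iff₀ ha0, mul_comm, ← Gamma_add_one ha0.ne']
    exact Gamma_le_one_of_mem_Icc ⟨by linarith, by linarith⟩
  have hGb := Gamma_pos_of_pos hb
  calc a / (2 * Gamma b) = (1 / 2) / (1 / a * Gamma b) := by field_simp
    _ ≤ Gamma (a + b) / (Gamma a * Gamma b) :=
      div_le_div₀ (by positivity) (one_half_le_Gamma hab) (mul_pos (Gamma_pos_of_pos ha0) hGb)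
        (by gcongr)

end Real

theorem nbp_integrand_lower_bound {a b s t x : ℝ} (ha0 : 0 ≤ a) (ha1 : a ≤ 1) (hb : 0 ≤ b)
    (hs : 1 ≤ s) (hxs : x ^ 2 ≤ s) (ht : t ∈ Icc s (2 * s)) :
    (32 * s)⁻¹ * (3 * s) ^ (-(2 + b)) ≤
      (2 * π * t) ^ (-(1 / 2 : ℝ)) * exp (-x ^ 2 / (2 * t)) * t ^ (a - 1) *
        (1 + t) ^ (-(a + b)) := by
  obtain ⟨hst, hts⟩ := ht
  have ht1 : 1 ≤ t := hs.trans hst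
  have h_normal : (16 * s)⁻¹ ≤ (2 * π * t) ^ (-(1 / 2 : ℝ)) :=
    calc (16 * s)⁻¹ ≤ (2 * π * t)⁻¹ := inv_anti₀ (by positivity) (by nlinarith [pi_le_four])
      _ = (2 * π * t) ^ (-1 : ℝ) := (rpow_neg_one _).symm
      _ ≤ _ := rpow_le_rpow_of_exponent_le (by nlinarith [pi_gt_three]) (by norm_num)
  have h_exp : 2⁻¹ ≤ exp (-x ^ 2 / (2 * t)) := by
    have : -(1 / 2 : ℝ) ≤ -x ^ 2 / (2 * t) := by
      rw [neg_div, neg_le_neg_iff, div_le_div_iff₀ (by positivity) (by positivity)]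
      linarith
    linarith [add_one_le_exp (-x ^ 2 / (2 * t))]
  have h_pow : (3 * s)⁻¹ ≤ t ^ (a - 1) :=
    calc (3 * s)⁻¹ ≤ t⁻¹ := inv_anti₀ (by positivity) (by linarith)
      _ = t ^ (-1 : ℝ) := (rpow_neg_one t).symm
      _ ≤ t ^ (a - 1) := rpow_le_rpow_of_exponent_le ht1 (by linarith)
  have h_tail : (3 * s) ^ (-(1 + b)) ≤ (1 + t) ^ (-(a + b)) :=
    calc (3 * s) ^ (-(1 + b)) ≤ (1 + t) ^ (-(1 + b)) :=
          rpow_le_rpow_of_nonpos (by positivity) (by linarith) (by linarith)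
      _ ≤ (1 + t) ^ (-(a + b)) := rpow_le_rpow_of_exponent_le (by linarith) (by linarith)
  calc (32 * s)⁻¹ * (3 * s) ^ (-(2 + b))
      = (16 * s)⁻¹ * 2⁻¹ * (3 * s)⁻¹ * (3 * s) ^ (-(1 + b)) := by
        rw [← rpow_neg_one (3 * s), mul_assoc _ ((3 * s) ^ (-1 : ℝ)),
          ← rpow_add (by positivity)]
        ring_nf
    _ ≤ _ := by gcongr

theorem ofReal_le_nbpMarginal {a b : ℝ} (ha0 : 0 < a) (ha1 : a ≤ 1) (hb : 1 ≤ b) (x : ℝ) :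
    ENNReal.ofReal ((64 * Gamma b)⁻¹ * a * (3 * (1 + x ^ 2)) ^ (-(2 + b))) ≤
      nbpMarginal a b x := by
  set s := 1 + x ^ 2
  have hs : 1 ≤ s := by simp only [s]; nlinarith
  set K := Gamma (a + b) / (Gamma a * Gamma b)
  have hK : a / (2 * Gamma b) ≤ K :=
    div_le_Gamma_add_div_Gamma_mul_Gamma ha0 ha1 (by linarith) (by linarith)
  have hK0 : 0 ≤ K := le_trans (by positivity) hK
  set L := K * ((32 * s)⁻¹ * (3 * s) ^ (-(2 + b)))
  have hL0 : 0 ≤ L := by positivity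
  calc ENNReal.ofReal ((64 * Gamma b)⁻¹ * a * (3 * s) ^ (-(2 + b)))
      = ENNReal.ofReal (a / (2 * Gamma b) * ((32 * s)⁻¹ * (3 * s) ^ (-(2 + b))) * s) := by
        congr 1; field_simp; norm_num
    _ ≤ ENNReal.ofReal (L * s) := by simp only [L]; gcongr
    _ = ∫⁻ _ in Icc s (2 * s), ENNReal.ofReal L := by
      rw [setLIntegral_const, volume_Icc, ← ENNReal.ofReal_mul hL0]; ring_nf
    _ ≤ ∫⁻ t in Icc s (2 * s), ENNReal.ofReal (K * ((2 * π * t) ^ (-(1 / 2 : ℝ)) *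
          exp (-x ^ 2 / (2 * t)) * t ^ (a - 1) * (1 + t) ^ (-(a + b)))) :=
      setLIntegral_mono' measurableSet_Icc fun t ht => ENNReal.ofReal_le_ofReal <|
        mul_le_mul_of_nonneg_left
          (nbp_integrand_lower_bound ha0.le ha1 (by linarith) hs (by simp only [s]; linarith) ht)
          hK0
    _ ≤ nbpMarginal a b x := lintegral_mono_set fun t ht => lt_of_lt_of_le (by linarith) ht.1

theorem three_mul_one_add_sq_le_rpow {p B E x : ℝ} (hp : 2 ≤ p) (hE : 1 ≤ E) (hEB : E ≤ p ^ B)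
    (hx : x ∈ Icc (-E) E) : 3 * (1 + x ^ 2) ≤ p ^ (2 * B + 3) := by
  have hp0 : 0 < p := by linarith
  have hxE : x ^ 2 ≤ (p ^ B) ^ 2 := by
    rw [← sq_abs]; exact pow_le_pow_left₀ (abs_nonneg x) ((abs_le.2 hx).trans hEB) 2
  have hEE : 1 ≤ (p ^ B) ^ 2 := one_le_pow₀ (hE.trans hEB)
  have hp3 : (2 : ℝ) ^ 3 ≤ p ^ 3 := pow_le_pow_left₀ (by norm_num) hp 3
  rw [rpow_add hp0, mul_comm 2 B, rpow_mul hp0.le, rpow_two, rpow_ofNat]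
  nlinarith

theorem neg_log_toReal_le_of_ofReal_le {δ : ℝ} {I : ENNReal} (hδ0 : 0 < δ) (hδ1 : δ ≤ 1)
    (h : ENNReal.ofReal δ ≤ I) : -log I.toReal ≤ -log δ := by
  by_cases hI : I = ⊤
  · simpa [hI] using log_nonpos hδ0.le hδ1
  · refine neg_le_neg (log_le_log hδ0 ?_)
    simpa [ENNReal.toReal_ofReal hδ0.le] using ENNReal.toReal_mono hI h

/-- Fix `b > 1`, `A > 0`, `B > 0`. If `p_n ≥ 2` with `p_n → ∞`,
`a_n ∈ (0,1]` with `a_n ≥ p_n^(-A)`, and `1 ≤ E_n ≤ p_n^B`, then there is `C > 0`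
such that for all sufficiently large `n`,
`-log( inf_{x ∈ [-E_n, E_n]} g_{a_n,b}(x) ) ≤ C log p_n`. -/
theorem nbp_marginal_log_inf_bound (b A B : ℝ) (hb : 1 < b) (hA : 0 < A) (hB : 0 < B)
    (p : ℕ → ℝ) (hp2 : ∀ n, 2 ≤ p n) (hp : Tendsto p atTop atTop)
    (a : ℕ → ℝ) (ha0 : ∀ n, 0 < a n) (ha1 : ∀ n, a n ≤ 1)
    (haLow : ∀ n, p n ^ (-A) ≤ a n)
    (E : ℕ → ℝ) (hE1 : ∀ n, 1 ≤ E n) (hEB : ∀ n, E n ≤ p n ^ B) :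
    ∃ C : ℝ, 0 < C ∧ ∀ᶠ n in atTop,
      -Real.log ((⨅ x ∈ Set.Icc (-(E n)) (E n), nbpMarginal (a n) b x).toReal) ≤
        C * Real.log (p n) := by
  set C := 1 + A + (2 * B + 3) * (2 + b)
  have hC : 0 < C := by positivity
  refine ⟨C, hC, ?_⟩
  filter_upwards [hp.eventually_ge_atTop (64 * Gamma b)] with n hn
  have hp0 : 0 < p n := by linarith [hp2 n]
  have h_density : ∀ x ∈ Icc (-(E n)) (E n),
      ENNReal.ofReal (p n ^ (-C)) ≤ nbpMarginal (a n) b x := fun x hx => by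
    refine le_trans (ENNReal.ofReal_le_ofReal ?_) (ofReal_le_nbpMarginal (ha0 n) (ha1 n) hb.le x)
    rw [show -C = -1 + -A + (2 * B + 3) * -(2 + b) by ring, rpow_add hp0, rpow_add hp0,
      rpow_mul hp0.le, rpow_neg_one]
    have h_const : (p n)⁻¹ ≤ (64 * Gamma b)⁻¹ :=
      inv_anti₀ (mul_pos (by norm_num) (Gamma_pos_of_pos (by linarith))) hn
    have h_tail : (p n ^ (2 * B + 3)) ^ (-(2 + b)) ≤ (3 * (1 + x ^ 2)) ^ (-(2 + b)) :=
      rpow_le_rpow_of_nonpos (by positivity)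
        (three_mul_one_add_sq_le_rpow (hp2 n) (hE1 n) (hEB n) hx) (by linarith)
    exact mul_le_mul (mul_le_mul h_const (haLow n) (by positivity) (by positivity)) h_tail
      (by positivity) (mul_nonneg (by positivity) (ha0 n).le)
  calc -log ((⨅ x ∈ Icc (-(E n)) (E n), nbpMarginal (a n) b x).toReal)
      ≤ -log (p n ^ (-C)) :=
        neg_log_toReal_le_of_ofReal_le (by positivity)
          (rpow_le_one_of_one_le_of_nonpos (by linarith [hp2 n]) (by linarith))
          (le_iInf₂ h_density)
    _ = C * log (p n) := by rw [log_rpow hp0]; ring
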